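/- arXiv:1003.4008 — 3 statements merged into one kernel-verified Lean document; each statement's English description precedes it below -/
import Mathlib

section
/- Given a short exact sequence 0 → L → M → N → 0 of finitely generated ℤⁿ-graded modules over the polynomial ring S = k[x₁,…,xₙ], the Stanley depth of M is at least the minimum of the Stanley depths of L and N. -/
open MvPolynomial

/-- The polynomial ring `S = k[x₁,…,xₙ]`. -/
abbrev PS (k : Type) [Field k] (n : ℕ) : Type := MvPolynomial (Fin n) k

/-- The `i`-th unit vector in `ℤⁿ`. -/
def eZ (n : ℕ) (i : Fin n) : Fin n → ℤ := fun j => if j = i then 1 else 0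

/-- Inclusion `ℕⁿ → ℤⁿ`. -/
def natDeg {n : ℕ} (d : Fin n → ℕ) : Fin n → ℤ := fun i => (d i : ℤ)

/-- Function `Fin n → ℕ` as a finitely supported function (exponent of a monomial). -/
noncomputable def toFs {n : ℕ} (d : Fin n → ℕ) : Fin n →₀ ℕ := Finsupp.equivFunOnFinite.symm d

/-- A `ℤⁿ`-grading of an `S`-module `M`: a direct sum decomposition of `M` into
`k`-subspaces compatible with multiplication by the variables. -/
structure MGrading (k : Type) [Field k] (n : ℕ) (M : Type) [AddCommGroup M]
    [Module (PS k n) M] [Module k M] [IsScalarTower k (PS k n) M] where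
  piece : (Fin n → ℤ) → Submodule k M
  indep : iSupIndep piece
  total : ⨆ d, piece d = ⊤
  smul_mem : ∀ (i : Fin n) (d : Fin n → ℤ) (m : M),
    m ∈ piece d → (X i : PS k n) • m ∈ piece (d + eZ n i)

section Core

variable {k : Type} [Field k] {n : ℕ} {M : Type} [AddCommGroup M]
  [Module (PS k n) M] [Module k M] [IsScalarTower k (PS k n) M]

/-- The `k`-subspace `m·k[Z]` spanned by the multiples of `m` by monomials in the
variables of `Z`. -/
def stanleySub (m : M) (Z : Finset (Fin n)) : Submodule k M :=
  Submodule.span k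
    {y | ∃ b : Fin n →₀ ℕ, (∀ j ∈ b.support, j ∈ Z) ∧ y = (monomial b (1 : k) : PS k n) • m}

/-- A Stanley decomposition of a `ℤⁿ`-graded module `M`: finitely many homogeneous
elements `mᵢ` and sets of variables `Zᵢ` such that each `mᵢ k[Zᵢ]` is a free Stanley
space and `M` is their direct sum as (`ℤⁿ`-graded) `k`-vector spaces. -/
structure StanleyDecomp (gr : MGrading k n M) where
  s : ℕ
  elem : Fin s → M
  deg : Fin s → (Fin n → ℤ)
  Z : Fin s → Finset (Fin n)
  homog : ∀ i, elem i ∈ gr.piece (deg i)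
  free : ∀ i, LinearIndependent k
    (fun b : {b : Fin n →₀ ℕ // ∀ j ∈ b.support, j ∈ Z i} =>
      ((monomial (b : Fin n →₀ ℕ) (1 : k) : PS k n) • elem i : M))
  indep : iSupIndep (fun i => (stanleySub (elem i) (Z i) : Submodule k M))
  total : (⨆ i, (stanleySub (elem i) (Z i) : Submodule k M)) = ⊤

/-- The Stanley depth of a `ℤⁿ`-graded module: the largest `d` such that there is a
Stanley decomposition all of whose Stanley spaces have at least `d` free variables. -/
noncomputable def sdepth (gr : MGrading k n M) : ℕ :=
  sSup {d | ∃ D : StanleyDecomp gr, ∀ i, d ≤ (D.Z i).card}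

/-- A grading is positively `a`-determined: concentrated in `ℕⁿ`, and multiplication
by `xᵢ : M_d → M_{d+eᵢ}` is bijective whenever `d i ≥ a i`. -/
structure IsPosDet (a : Fin n → ℕ) (gr : MGrading k n M) : Prop where
  nonneg : ∀ d : Fin n → ℤ, (∃ i, d i < 0) → gr.piece d = ⊥
  inj : ∀ (d : Fin n → ℕ) (i : Fin n), a i ≤ d i → ∀ m ∈ gr.piece (natDeg d),
    ∀ m' ∈ gr.piece (natDeg d),
      (X i : PS k n) • m = (X i : PS k n) • m' → m = m'
  surj : ∀ (d : Fin n → ℕ) (i : Fin n), a i ≤ d i →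
    ∀ m' ∈ gr.piece (natDeg d + eZ n i),
      ∃ m ∈ gr.piece (natDeg d), (X i : PS k n) • m = m'

/-- A Stanley decomposition is positively `a`-determined: all degrees `deg i` lie in
`[0,a]` and `{x_j : a j ≤ (deg i) j} ⊆ Z i`. -/
def StanleyDecomp.IsPosDetDecomp {gr : MGrading k n M} (a : Fin n → ℕ)
    (D : StanleyDecomp gr) : Prop :=
  ∀ i, ∃ d : Fin n → ℕ, D.deg i = natDeg d ∧ (∀ j, d j ≤ a j) ∧
    (∀ j, a j ≤ d j → j ∈ D.Z i)

/-- `#{j : a j ≤ b j}`, the cardinality of `suppᵃ(b)`. -/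
def suppCardA {n : ℕ} (a b : Fin n → ℕ) : ℕ :=
  (Finset.univ.filter (fun j => a j ≤ b j)).card

/-- `#supp(c) = #{j : c j ≥ 1}`. -/
def suppCard {n : ℕ} (c : Fin n → ℕ) : ℕ :=
  (Finset.univ.filter (fun j => 1 ≤ c j)).card

/-- `#supp(b)` for `b ∈ ℤⁿ`. -/
def suppCardZ {n : ℕ} (b : Fin n → ℤ) : ℕ :=
  (Finset.univ.filter (fun j => 1 ≤ b j)).card

/-- The set `[[c,b]]ₐ` of degrees where the interval module `kₐ[c,b]` is nonzero. -/
def intervalSet {n : ℕ} (a c b : Fin n → ℕ) : Set (Fin n → ℕ) :=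
  {d | (∀ i, c i ≤ d i) ∧ ∀ i, b i < a i → d i ≤ b i}

/-- A positively `a`-determined quasi Stanley decomposition of an (`ℕⁿ`-graded)
module `M`, encoded by the images `f i d` of the monomial basis elements `x̄^d` of the
interval modules `kₐ[cᵢ,bᵢ]` under a graded `k`-linear bijection
`⊕ᵢ kₐ[cᵢ,bᵢ] → M` satisfying `f(x̄^d) = x^{d-cᵢ}·f(x̄^{cᵢ})`. -/
structure QSDecomp (a : Fin n → ℕ) (gr : MGrading k n M) where
  s : ℕ
  c : Fin s → (Fin n → ℕ)
  b : Fin s → (Fin n → ℕ)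
  cb : ∀ i j, c i j ≤ b i j
  ba : ∀ i j, b i j ≤ a j
  f : Fin s → (Fin n → ℕ) → M
  compat : ∀ i d, d ∈ intervalSet a (c i) (b i) →
    f i d = (monomial (toFs (fun j => d j - c i j)) (1 : k) : PS k n) • f i (c i)
  mem : ∀ i d, d ∈ intervalSet a (c i) (b i) → f i d ∈ gr.piece (natDeg d)
  li : ∀ d : Fin n → ℕ, LinearIndependent k
    (fun i : {i : Fin s // d ∈ intervalSet a (c i) (b i)} => (f (i : Fin s) d : M))
  span : ∀ d : Fin n → ℕ, gr.piece (natDeg d) =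
    Submodule.span k {y | ∃ i : Fin s, d ∈ intervalSet a (c i) (b i) ∧ y = f i d}

/-- `shreg` computed via positively `a`-determined quasi Stanley decompositions. -/
noncomputable def shregA (a : Fin n → ℕ) (gr : MGrading k n M) : ℕ :=
  sInf {r | ∃ D : QSDecomp a gr, ∀ i, suppCard (D.c i) ≤ r}

/-- `shreg(M)`: minimum over all quasi Stanley decompositions (for all `a`) of the
maximal support-cardinality of the bottom degrees `cᵢ`. -/
noncomputable def shreg (gr : MGrading k n M) : ℕ :=
  sInf {r | ∃ a : Fin n → ℕ, ∃ D : QSDecomp a gr, ∀ i, suppCard (D.c i) ≤ r}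

end Core

/-- Depth of an `S`-module with respect to the ideal `(x₁,…,xₙ)`: the supremum of
lengths of regular sequences consisting of elements of `(x₁,…,xₙ)`. -/
noncomputable def mdepth (k : Type) [Field k] (n : ℕ) (M : Type) [AddCommGroup M]
    [Module (PS k n) M] : ℕ :=
  sSup {d | ∃ rs : List (PS k n), rs.length = d ∧
    (∀ r ∈ rs, r ∈ Ideal.span (Set.range (X : Fin n → PS k n))) ∧
    RingTheory.Sequence.IsRegular M rs}

/-- Krull dimension of an `S`-module, i.e. the Krull dimension of `S/ann(M)`. -/
noncomputable def mdim (k : Type) [Field k] (n : ℕ) (M : Type) [AddCommGroup M]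
    [Module (PS k n) M] : WithBot (WithTop ℕ) :=
  ringKrullDim (PS k n ⧸ Module.annihilator (PS k n) M)

/-- An `S`-module is Cohen–Macaulay if its depth equals its Krull dimension. -/
def IsCMmod (k : Type) [Field k] (n : ℕ) (M : Type) [AddCommGroup M]
    [Module (PS k n) M] : Prop :=
  (mdepth k n M : WithBot (WithTop ℕ)) = mdim k n M

/-- The defining ideal of the interval module `kₐ[c,b]`:
generated by `xᵢ^{bᵢ-cᵢ+1}` for the `i` with `bᵢ < aᵢ`. -/
noncomputable def intervalIdeal (k : Type) [Field k] {n : ℕ} (a c b : Fin n → ℕ) : Ideal (PS k n) :=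
  Ideal.span {p | ∃ i, b i < a i ∧ p = (X i : PS k n) ^ (b i - c i + 1)}

/-- The interval module `kₐ[c,b] = x^c · S/(xᵢ^{bᵢ+1} : bᵢ < aᵢ)`, realized (up to the
degree shift by `c`, which is recorded in the grading `intervalPiece`) as the quotient
`S/(xᵢ^{bᵢ-cᵢ+1} : bᵢ < aᵢ)`. -/
abbrev IntervalMod (k : Type) [Field k] {n : ℕ} (a c b : Fin n → ℕ) : Type :=
  PS k n ⧸ intervalIdeal k a c b

/-- The graded piece of `kₐ[c,b]` in degree `d`: spanned by (the image of) the
monomial `x^{d-c}` when `d ⪰ c`, and `0` otherwise. -/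
noncomputable def intervalPiece (k : Type) [Field k] {n : ℕ} (a c b : Fin n → ℕ)
    (d : Fin n → ℤ) : Submodule k (IntervalMod k a c b) :=
  Submodule.span k {y | ∃ e : Fin n →₀ ℕ, (∀ i, d i = c i + e i) ∧
    y = Ideal.Quotient.mk (intervalIdeal k a c b) (monomial e (1 : k))}

/-- `d - eᵢ` in `ℕⁿ`. -/
def subE {n : ℕ} (d : Fin n → ℕ) (i : Fin n) : Fin n → ℕ :=
  fun j => if j = i then d j - 1 else d j

/-- `N` is (isomorphic to) the Alexander dual `𝒜ₐ(M)` of `M`:  there is a family of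
perfect `k`-bilinear pairings `N_d × M_{a-d} → k` (for `d ∈ [0,a]`) intertwining
multiplication by `xᵢ` on the two sides. -/
structure IsAlexDual {k : Type} [Field k] {n : ℕ} {M N : Type}
    [AddCommGroup M] [Module (PS k n) M] [Module k M] [IsScalarTower k (PS k n) M]
    [AddCommGroup N] [Module (PS k n) N] [Module k N] [IsScalarTower k (PS k n) N]
    (a : Fin n → ℕ) (grM : MGrading k n M) (grN : MGrading k n N) : Prop where
  exists_pairing : ∃ B : (Fin n → ℕ) → N → M → k,
    (∀ d y y' m, B d (y + y') m = B d y m + B d y' m) ∧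
    (∀ d (r : k) y m, B d (r • y) m = r * B d y m) ∧
    (∀ d y m m', B d y (m + m') = B d y m + B d y m') ∧
    (∀ d (r : k) y m, B d y (r • m) = r * B d y m) ∧
    (∀ d : Fin n → ℕ, (∀ j, d j ≤ a j) →
      (∀ y ∈ grN.piece (natDeg d),
        (∀ m ∈ grM.piece (natDeg (fun j => a j - d j)), B d y m = 0) → y = 0) ∧
      (∀ m ∈ grM.piece (natDeg (fun j => a j - d j)),
        (∀ y ∈ grN.piece (natDeg d), B d y m = 0) → m = 0)) ∧
    (∀ (d : Fin n → ℕ) (i : Fin n), (∀ j, d j ≤ a j) → 1 ≤ d i →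
      ∀ y ∈ grN.piece (natDeg (subE d i)),
        ∀ m ∈ grM.piece (natDeg (fun j => a j - d j)),
          B d ((X i : PS k n) • y) m = B (subE d i) y ((X i : PS k n) • m))

section Skel

variable {k : Type} [Field k] {n : ℕ} {M : Type} [AddCommGroup M]
  [Module (PS k n) M] [Module k M] [IsScalarTower k (PS k n) M]

/-- `M^{≥l}` (i.e. `M^{>l-1}`): the `S`-submodule of `M` generated by all graded
components `M_d` with `#suppᵃ(d) ≥ l`. -/
noncomputable def skelSubGe (a : Fin n → ℕ) (gr : MGrading k n M) (l : ℕ) : Submodule (PS k n) M :=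
  Submodule.span (PS k n)
    {m : M | ∃ d : Fin n → ℕ, l ≤ suppCardA a d ∧ m ∈ gr.piece (natDeg d)}

/-- `M^{>l}`: the `S`-submodule of `M` generated by all graded components `M_d` with
`#suppᵃ(d) > l`. -/
noncomputable def skelSubGt (a : Fin n → ℕ) (gr : MGrading k n M) (l : ℕ) : Submodule (PS k n) M :=
  skelSubGe a gr (l + 1)

end Skel

/-- The monomial `x^d`. -/
noncomputable def mono (k : Type) [Field k] {n : ℕ} (d : Fin n → ℕ) : PS k n :=
  monomial (toFs d) (1 : k)

/-- The sliding operation `a ◁ b`. -/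
def slide {n : ℕ} (a b : Fin n → ℕ) : Fin n → ℕ :=
  fun i => if a i = 0 then 0 else a i + b i

/-- The irreducible monomial ideal `𝔪^a = (xᵢ^{aᵢ} : aᵢ > 0)`. -/
noncomputable def irrIdeal (k : Type) [Field k] {n : ℕ} (a : Fin n → ℕ) : Ideal (PS k n) :=
  Ideal.span {p | ∃ i, 0 < a i ∧ p = (X i : PS k n) ^ (a i)}

/-- The degree-`d` piece of the natural monomial grading of `S/I` for a monomial
ideal `I`: spanned by the image of the monomial of degree `d`. -/
noncomputable def quotMonPiece (k : Type) [Field k] {n : ℕ} (I : Ideal (PS k n))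
    (d : Fin n → ℤ) : Submodule k (PS k n ⧸ I) :=
  Submodule.span k {y | ∃ e : Fin n →₀ ℕ, (∀ i, d i = e i) ∧
    y = Ideal.Quotient.mk I (monomial e (1 : k))}

/-- The degree-`d` piece of the natural monomial grading of a monomial ideal `I`
(regarded as an `S`-module): spanned by the monomial of degree `d` if it lies in `I`. -/
noncomputable def idealMonPiece (k : Type) [Field k] {n : ℕ} (I : Ideal (PS k n))
    (d : Fin n → ℤ) : Submodule k ↥I :=
  Submodule.span k {y : ↥I | ∃ e : Fin n →₀ ℕ, (∀ i, d i = e i) ∧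
    (y : PS k n) = monomial e (1 : k)}


/-! Push a Stanley decomposition of `L` forward along `f` and lift the generators of one of `N`
to homogeneous preimages under `g`. Together these Stanley spaces decompose `M`: the lifted spaces
map isomorphically onto the independent spaces of `N`, which span `N`, so their sum meets
`ker g = range f` trivially and together with it spans `M`. Every space of the glued
decomposition has at least `min (sdepth L) (sdepth N)` variables. -/

section Lattice

variable {α : Type*} [CompleteLattice α] {ι κ : Type*}

theorem iSupIndep.sumElim [IsModularLattice α] {p : ι → α} {q : κ → α} (hp : iSupIndep p)
    (hq : iSupIndep q) (hpq : Disjoint (⨆ i, p i) (⨆ j, q j)) :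
    iSupIndep (Sum.elim p q) := by
  rintro (i | j)
  · refine Disjoint.mono_right ?_ <| (hp i).disjoint_sup_right_of_disjoint_sup_left
      (hpq.mono_left (sup_le (le_iSup p i) (iSup₂_le fun i _ => le_iSup p i)))
    refine iSup₂_le ?_
    rintro (i' | j) h
    · exact le_sup_of_le_left (le_iSup₂_of_le i' (fun h' => h (congrArg _ h')) le_rfl)
    · exact le_sup_of_le_right (le_iSup q j)
  · refine Disjoint.mono_right ?_ <| (hq j).disjoint_sup_right_of_disjoint_sup_left
      (hpq.symm.mono_left (sup_le (le_iSup q j) (iSup₂_le fun j _ => le_iSup q j)))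
    refine iSup₂_le ?_
    rintro (i | j') h
    · exact le_sup_of_le_right (le_iSup p i)
    · exact le_sup_of_le_left (le_iSup₂_of_le j' (fun h' => h (congrArg _ h')) le_rfl)

theorem iSupIndep.finAppend [IsModularLattice α] {m n : ℕ} {p : Fin m → α} {q : Fin n → α}
    (hp : iSupIndep p) (hq : iSupIndep q) (hpq : Disjoint (⨆ i, p i) (⨆ j, q j)) :
    iSupIndep (Fin.append p q) :=
  iSupIndep.comp' (f := finSumFinEquiv) (Fin.append_comp_sumElim ▸ hp.sumElim hq hpq)
    finSumFinEquiv.surjective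

theorem iSup_finAppend {m n : ℕ} (p : Fin m → α) (q : Fin n → α) :
    ⨆ t, Fin.append p q t = (⨆ i, p i) ⊔ ⨆ j, q j := by
  rw [← finSumFinEquiv.surjective.iSup_comp, iSup_sum]
  simp

end Lattice

section Submodule

open Submodule LinearMap

variable {R : Type*} [Ring R] {L M N : Type*} [AddCommGroup L] [Module R L] [AddCommGroup M]
  [Module R M] [AddCommGroup N] [Module R N] {ι : Type*}

theorem iSupIndep.of_map_of_disjoint_ker (g : M →ₗ[R] N) {q : ι → Submodule R M}
    (hq : iSupIndep fun j => (q j).map g) (hker : ∀ j, Disjoint (q j) (ker g)) :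
    iSupIndep q := by
  intro j
  rw [disjoint_def]
  intro x hxj hx
  refine disjoint_def.mp (hker j) x hxj (disjoint_def.mp (hq j) (g x) (mem_map_of_mem hxj) ?_)
  have := mem_map_of_mem (f := g) hx
  simpa only [Submodule.map_iSup] using this

theorem disjoint_iSup_ker_of_iSupIndep_map (g : M →ₗ[R] N) {q : ι → Submodule R M}
    (hq : iSupIndep fun j => (q j).map g) (hker : ∀ j, Disjoint (q j) (ker g)) :
    Disjoint (⨆ j, q j) (ker g) := by
  rw [disjoint_def]
  intro x hx hgx
  obtain ⟨c, hc, rfl⟩ := (mem_iSup_iff_exists_finsupp q x).mp hx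
  have hgc : ∀ j ∈ c.support, g (c j) = 0 :=
    (iSupIndep_iff_finsetSum_eq_zero_imp_eq_zero _).mp hq c.support (fun j => g (c j))
      (fun j _ => mem_map_of_mem (hc j)) (by rw [← map_sum]; exact hgx)
  refine Finset.sum_eq_zero fun j hj => disjoint_def.mp (hker j) _ (hc j) (hgc j hj)

theorem map_eq_of_iSup_eq_top_of_iSupIndep {p : ι → Submodule R M} {q : ι → Submodule R N}
    (g : M →ₗ[R] N) (hg : Function.Surjective g) (hp : ⨆ i, p i = ⊤) (hq : iSupIndep q)
    (hpq : ∀ i, (p i).map g ≤ q i) (i : ι) : (p i).map g = q i := by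
  refine (hpq i).antisymm fun y hy => ?_
  obtain ⟨m, rfl⟩ := hg y
  have hm : m ∈ p i ⊔ ⨆ (j) (_ : j ≠ i), p j := by rw [← iSup_split_single, hp]; trivial
  obtain ⟨u, hu, v, hv, rfl⟩ := mem_sup.mp hm
  have hgv : g v ∈ ⨆ (j) (_ : j ≠ i), q j := by
    have := mem_map_of_mem (f := g) hv
    simp only [Submodule.map_iSup] at this
    exact iSup₂_mono (fun j _ => hpq j) this
  have hgv' : g v ∈ q i := by
    simpa using sub_mem hy (hpq i (mem_map_of_mem hu))
  rw [map_add, disjoint_def.mp (hq i) _ hgv' hgv, add_zero]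
  exact mem_map_of_mem hu

theorem iSupIndep_finAppend_of_exact {s t : ℕ} (f : L →ₗ[R] M) (g : M →ₗ[R] N)
    (hf : Function.Injective f) (hfg : Function.Exact f g) {p : Fin s → Submodule R L}
    {q : Fin t → Submodule R M} (hp : iSupIndep p) (hq : iSupIndep fun j => (q j).map g)
    (hker : ∀ j, Disjoint (q j) (ker g)) :
    iSupIndep (Fin.append (fun i => (p i).map f) q) :=
  (f.iSupIndep_map hf hp).finAppend (hq.of_map_of_disjoint_ker g hker) <|
    (disjoint_iSup_ker_of_iSupIndep_map g hq hker).symm.mono_left <|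
      iSup_le fun _ => map_le_range.trans hfg.linearMap_ker_eq.ge

theorem iSup_finAppend_eq_top_of_exact {s t : ℕ} (f : L →ₗ[R] M) (g : M →ₗ[R] N)
    (hfg : Function.Exact f g) {p : Fin s → Submodule R L} {q : Fin t → Submodule R M}
    (hp : ⨆ i, p i = ⊤) (hq : ⨆ j, (q j).map g = ⊤) :
    ⨆ u, Fin.append (fun i => (p i).map f) q u = ⊤ := by
  rw [iSup_finAppend, ← Submodule.map_iSup, hp, Submodule.map_top, ← hfg.linearMap_ker_eq, sup_comm,
    ← comap_map_eq, Submodule.map_iSup, hq, comap_top]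

end Submodule

section Stanley

open Submodule

variable {k : Type} [Field k] {n : ℕ} {M M' : Type} [AddCommGroup M] [Module (PS k n) M]
  [Module k M] [AddCommGroup M'] [Module (PS k n) M'] [Module k M']

variable (k) in
noncomputable def stanleyMonomials (m : M) (Z : Finset (Fin n)) :
    {b : Fin n →₀ ℕ // ∀ j ∈ b.support, j ∈ Z} → M :=
  fun b => (monomial (b : Fin n →₀ ℕ) (1 : k) : PS k n) • m

theorem stanleySub_eq_span_range (m : M) (Z : Finset (Fin n)) :
    stanleySub m Z = span k (Set.range (stanleyMonomials k m Z)) := by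
  rw [stanleySub]
  congr 1
  ext y
  exact ⟨fun ⟨b, hb, hy⟩ => ⟨⟨b, hb⟩, hy.symm⟩, fun ⟨b, hy⟩ => ⟨b, b.2, hy.symm⟩⟩

variable [IsScalarTower k (PS k n) M] [IsScalarTower k (PS k n) M']

theorem comp_stanleyMonomials (φ : M →ₗ[PS k n] M') (m : M) (Z : Finset (Fin n)) :
    φ.restrictScalars k ∘ stanleyMonomials k m Z = stanleyMonomials k (φ m) Z :=
  funext fun _ => φ.map_smul _ _

theorem map_stanleySub (φ : M →ₗ[PS k n] M') (m : M) (Z : Finset (Fin n)) :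
    (stanleySub m Z).map (φ.restrictScalars k) = stanleySub (φ m) Z := by
  rw [stanleySub_eq_span_range, stanleySub_eq_span_range, map_span, ← Set.range_comp,
    comp_stanleyMonomials]

theorem disjoint_stanleySub_ker (φ : M →ₗ[PS k n] M') {m : M} {Z : Finset (Fin n)}
    (h : LinearIndependent k (stanleyMonomials k (φ m) Z)) :
    Disjoint (stanleySub m Z) (LinearMap.ker (φ.restrictScalars k)) := by
  rw [stanleySub_eq_span_range]
  exact Submodule.range_ker_disjoint (comp_stanleyMonomials φ m Z ▸ h)

theorem LinearIndependent.stanleyMonomials_map {φ : M →ₗ[PS k n] M'} (hφ : Function.Injective φ)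
    {m : M} {Z : Finset (Fin n)} (h : LinearIndependent k (stanleyMonomials k m Z)) :
    LinearIndependent k (stanleyMonomials k (φ m) Z) :=
  comp_stanleyMonomials φ m Z ▸ h.map' (φ.restrictScalars k) (LinearMap.ker_eq_bot.mpr hφ)

theorem LinearIndependent.of_stanleyMonomials_map (φ : M →ₗ[PS k n] M') {m : M}
    {Z : Finset (Fin n)} (h : LinearIndependent k (stanleyMonomials k (φ m) Z)) :
    LinearIndependent k (stanleyMonomials k m Z) :=
  .of_comp (φ.restrictScalars k) (comp_stanleyMonomials φ m Z ▸ h)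

end Stanley

section Glue

variable {k : Type} [Field k] {n : ℕ} {L M N : Type}
  [AddCommGroup L] [Module (PS k n) L] [Module k L] [IsScalarTower k (PS k n) L]
  [AddCommGroup M] [Module (PS k n) M] [Module k M] [IsScalarTower k (PS k n) M]
  [AddCommGroup N] [Module (PS k n) N] [Module k N] [IsScalarTower k (PS k n) N]
  {grL : MGrading k n L} {grM : MGrading k n M} {grN : MGrading k n N}

theorem stanleySub_finAppend {s t : ℕ} (f : L →ₗ[PS k n] M) (a : Fin s → L) (b : Fin t → M)
    (Za : Fin s → Finset (Fin n)) (Zb : Fin t → Finset (Fin n)) :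
    (fun u => stanleySub (Fin.append (fun i => f (a i)) b u) (Fin.append Za Zb u)) =
      Fin.append (fun i => (stanleySub (a i) (Za i)).map (f.restrictScalars k))
        (fun j => stanleySub (b j) (Zb j)) :=
  funext <| Fin.addCases (by simp [map_stanleySub]) (by simp)

noncomputable def StanleyDecomp.glue (f : L →ₗ[PS k n] M) (g : M →ₗ[PS k n] N)
    (hf : Function.Injective f) (hfg : Function.Exact f g)
    (hfgr : ∀ d, ∀ x ∈ grL.piece d, f x ∈ grM.piece d)
    (DL : StanleyDecomp grL) (DN : StanleyDecomp grN) (lift : Fin DN.s → M)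
    (hlift_mem : ∀ j, lift j ∈ grM.piece (DN.deg j)) (hlift : ∀ j, g (lift j) = DN.elem j) :
    StanleyDecomp grM where
  s := DL.s + DN.s
  elem := Fin.append (fun i => f (DL.elem i)) lift
  deg := Fin.append DL.deg DN.deg
  Z := Fin.append DL.Z DN.Z
  homog := Fin.addCases (by simpa using fun i => hfgr _ _ (DL.homog i)) (by simpa using hlift_mem)
  free := by
    refine Fin.addCases (fun i => ?_) (fun j => ?_)
    · rw [Fin.append_left, Fin.append_left]
      exact (DL.free i).stanleyMonomials_map hf
    · rw [Fin.append_right, Fin.append_right]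
      exact .of_stanleyMonomials_map g (by rw [hlift]; exact DN.free j)
  indep := by
    have hmap : (fun j => (stanleySub (lift j) (DN.Z j)).map (g.restrictScalars k)) =
        fun j => stanleySub (DN.elem j) (DN.Z j) := by
      simp only [map_stanleySub, hlift]
    rw [stanleySub_finAppend]
    exact iSupIndep_finAppend_of_exact (f.restrictScalars k) (g.restrictScalars k) hf hfg DL.indep
      (hmap ▸ DN.indep) fun j => disjoint_stanleySub_ker g (by rw [hlift]; exact DN.free j)
  total := by
    rw [stanleySub_finAppend]
    refine iSup_finAppend_eq_top_of_exact (f.restrictScalars k) (g.restrictScalars k) hfg DL.total ?_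
    simpa only [map_stanleySub, hlift] using DN.total

end Glue

section Sdepth

variable {k : Type} [Field k] {n : ℕ} {M : Type} [AddCommGroup M] [Module (PS k n) M]
  [Module k M] [IsScalarTower k (PS k n) M] {gr : MGrading k n M}

def StanleyDecomp.ofSubsingleton [Subsingleton M] (gr : MGrading k n M) : StanleyDecomp gr where
  s := 0
  elem := Fin.elim0
  deg := Fin.elim0
  Z := Fin.elim0
  homog := fun i => i.elim0
  free := fun i => i.elim0
  indep := iSupIndep_subsingleton _
  total := Subsingleton.elim _ _

/-- The empty decomposition bounds every `d`, and `sSup` of the unbounded set `ℕ` is `0`. -/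
theorem sdepth_of_subsingleton [Subsingleton M] (gr : MGrading k n M) : sdepth gr = 0 := by
  have : {d | ∃ D : StanleyDecomp gr, ∀ i, d ≤ (D.Z i).card} = Set.univ :=
    Set.eq_univ_of_forall fun _ => ⟨.ofSubsingleton gr, fun i => i.elim0⟩
  rw [sdepth, this, csSup_of_not_bddAbove not_bddAbove_univ, csSup_empty]
  rfl

theorem nontrivial_of_sdepth_pos (h : 0 < sdepth gr) : Nontrivial M := by
  by_contra hM
  rw [not_nontrivial_iff_subsingleton] at hM
  rw [sdepth_of_subsingleton] at h
  exact h.false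

theorem StanleyDecomp.s_pos [Nontrivial M] (D : StanleyDecomp gr) : 0 < D.s := by
  refine Nat.pos_of_ne_zero fun hs => ?_
  have : IsEmpty (Fin D.s) := by rw [hs]; infer_instance
  exact bot_ne_top ((iSup_of_empty _).symm.trans D.total)

theorem le_sdepth [Nontrivial M] (D : StanleyDecomp gr) {d : ℕ} (hD : ∀ i, d ≤ (D.Z i).card) :
    d ≤ sdepth gr := by
  refine le_csSup ⟨n, ?_⟩ ⟨D, hD⟩
  rintro d' ⟨D', hD'⟩
  exact (hD' ⟨0, D'.s_pos⟩).trans ((Finset.card_le_univ _).trans_eq (Fintype.card_fin n))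

theorem exists_stanleyDecomp_of_le_sdepth {d : ℕ} (hd : 0 < d) (h : d ≤ sdepth gr) :
    ∃ D : StanleyDecomp gr, ∀ i, d ≤ (D.Z i).card := by
  have hne : {d | ∃ D : StanleyDecomp gr, ∀ i, d ≤ (D.Z i).card}.Nonempty := by
    refine Set.nonempty_iff_ne_empty.mpr fun he => ?_
    rw [sdepth, he, csSup_empty] at h
    exact (hd.trans_le h).false
  obtain ⟨a, ⟨D, hD⟩, ha⟩ := exists_lt_of_lt_csSup hne (Nat.sub_one_lt_of_le hd h)
  exact ⟨D, fun i => (Nat.le_of_pred_lt ha).trans (hD i)⟩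

end Sdepth

theorem stmt0_general (k : Type) [Field k] (n : ℕ) (L M N : Type)
    [AddCommGroup L] [Module (PS k n) L] [Module k L] [IsScalarTower k (PS k n) L]
    [AddCommGroup M] [Module (PS k n) M] [Module k M] [IsScalarTower k (PS k n) M]
    [AddCommGroup N] [Module (PS k n) N] [Module k N] [IsScalarTower k (PS k n) N]
    (grL : MGrading k n L) (grM : MGrading k n M) (grN : MGrading k n N)
    (f : L →ₗ[PS k n] M) (g : M →ₗ[PS k n] N)
    (hf : Function.Injective f) (hg : Function.Surjective g)
    (hfg : LinearMap.range f = LinearMap.ker g)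
    (hfgr : ∀ d, ∀ x ∈ grL.piece d, f x ∈ grM.piece d)
    (hggr : ∀ d, ∀ x ∈ grM.piece d, g x ∈ grN.piece d) :
    min (sdepth grL) (sdepth grN) ≤ sdepth grM := by
  rcases Nat.eq_zero_or_pos (min (sdepth grL) (sdepth grN)) with hd | hd
  · exact hd ▸ Nat.zero_le _
  obtain ⟨DL, hDL⟩ := exists_stanleyDecomp_of_le_sdepth hd (min_le_left _ _)
  obtain ⟨DN, hDN⟩ := exists_stanleyDecomp_of_le_sdepth hd (min_le_right _ _)
  have : Nontrivial L := nontrivial_of_sdepth_pos (hd.trans_le (min_le_left _ _))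
  have : Nontrivial M := hf.nontrivial
  have hpieces : ∀ d, (grM.piece d).map (g.restrictScalars k) = grN.piece d :=
    map_eq_of_iSup_eq_top_of_iSupIndep (g.restrictScalars k) hg grM.total grN.indep
      fun d => Submodule.map_le_iff_le_comap.mpr fun x hx => hggr d x hx
  choose lift hlift_mem hlift using fun j => (hpieces (DN.deg j)).ge (DN.homog j)
  refine le_sdepth (.glue f g hf (LinearMap.exact_iff.mpr hfg.symm) hfgr DL DN lift hlift_mem
    hlift) (Fin.addCases (fun i => ?_) fun j => ?_)
  · simpa [StanleyDecomp.glue] using hDL i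
  · simpa [StanleyDecomp.glue] using hDN j

theorem stmt0 (k : Type) [Field k] (n : ℕ) (L M N : Type)
    [AddCommGroup L] [Module (PS k n) L] [Module k L] [IsScalarTower k (PS k n) L] [Module.Finite (PS k n) L]
    [AddCommGroup M] [Module (PS k n) M] [Module k M] [IsScalarTower k (PS k n) M] [Module.Finite (PS k n) M]
    [AddCommGroup N] [Module (PS k n) N] [Module k N] [IsScalarTower k (PS k n) N] [Module.Finite (PS k n) N]
    (grL : MGrading k n L) (grM : MGrading k n M) (grN : MGrading k n N)
    (f : L →ₗ[PS k n] M) (g : M →ₗ[PS k n] N)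
    (hf : Function.Injective f) (hg : Function.Surjective g)
    (hfg : LinearMap.range f = LinearMap.ker g)
    (hfgr : ∀ d, ∀ x ∈ grL.piece d, f x ∈ grM.piece d)
    (hggr : ∀ d, ∀ x ∈ grM.piece d, g x ∈ grN.piece d) :
    min (sdepth grL) (sdepth grN) ≤ sdepth grM :=
  stmt0_general k n L M N grL grM grN f g hf hg hfg hfgr hggr
end

section
/- For a positively a-determined module M, sdepth(M) equals the maximum of sdepth(𝒟) over all positively a-determined quasi Stanley decompositions 𝒟 of M, where sdepth of a quasi Stanley decomposition ⊕ᵢ kₐ[cᵢ,bᵢ] is min #{j : (bᵢ)ⱼ ≥ aⱼ}. -/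
open MvPolynomial

/-!
Both kinds of decomposition amount to choosing, in every degree `d ∈ ℕⁿ`, a `k`-basis of `M_d`
consisting of the vectors `x^{d-cᵢ} mᵢ` for the pieces `i` whose degree set contains `d`.
An interval `[[c,b]]ₐ` is the disjoint union of the Stanley regions `c' + ℕ^{suppᵃ(b)}` over its
corners `c'`, so a quasi Stanley decomposition refines to a Stanley decomposition with exactly
`#suppᵃ(bᵢ)` free variables per space. Conversely, as `M` is positively `a`-determined,
multiplication by `x^{d - d ⊓ a}` maps `M_{d ⊓ a}` bijectively onto `M_d`; so a Stanley space
`x^c k[Z]` with `c ≤ a` may be replaced by the interval from `c` to `c` raised to `a` on `Z`, whose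
`suppᵃ` contains `Z`, and the spaces with `c ≰ a` may be dropped.
-/

open Set

section Monomials

variable {k : Type} [Field k] {n : ℕ}

lemma toFs_add (u v : Fin n → ℕ) : toFs (u + v) = toFs u + toFs v :=
  Finsupp.ext fun _ => rfl

lemma toFs_coe (b : Fin n →₀ ℕ) : toFs ⇑b = b :=
  Finsupp.equivFunOnFinite.symm_apply_apply b

lemma mono_add (u v : Fin n → ℕ) : mono k (u + v) = mono k u * mono k v := by
  rw [mono, mono, mono, toFs_add, monomial_mul, one_mul]

lemma mono_zero : mono k (0 : Fin n → ℕ) = 1 := by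
  rw [mono, show toFs (0 : Fin n → ℕ) = 0 from Finsupp.ext fun _ => rfl, monomial_zero', C_1]

lemma mono_sub_mul_mono_sub {c e d : Fin n → ℕ} (hce : c ≤ e) (hed : e ≤ d) :
    mono k (d - e) * mono k (e - c) = mono k (d - c) := by
  rw [← mono_add, tsub_add_tsub_cancel hed hce]

lemma mono_sub_smul_mono_sub_smul {M : Type} [AddCommGroup M] [Module (PS k n) M]
    {c e d : Fin n → ℕ} (hce : c ≤ e) (hed : e ≤ d) (m : M) :
    mono k (d - e) • mono k (e - c) • m = mono k (d - c) • m := by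
  rw [smul_smul, mono_sub_mul_mono_sub hce hed]

lemma mono_coe (b : Fin n →₀ ℕ) : mono k ⇑b = monomial b (1 : k) := by
  rw [mono, toFs_coe]

lemma natDeg_add (u v : Fin n → ℕ) : natDeg (u + v) = natDeg u + natDeg v :=
  funext fun _ => Nat.cast_add _ _

lemma natDeg_injective : Function.Injective (natDeg (n := n)) :=
  fun _ _ h => funext fun j => Nat.cast_injective (R := ℤ) (congrFun h j)

lemma natDeg_single_one (i : Fin n) : natDeg (Pi.single i 1) = eZ n i := by
  funext j
  by_cases hj : j = i <;> simp [natDeg, eZ, hj]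

lemma natDeg_toNat {e : Fin n → ℤ} (he : ∀ j, 0 ≤ e j) :
    natDeg (fun j => (e j).toNat) = e :=
  funext fun j => Int.toNat_of_nonneg (he j)

end Monomials

section Grading

variable {k : Type} [Field k] {n : ℕ} {M : Type} [AddCommGroup M]
  [Module (PS k n) M] [Module k M] [IsScalarTower k (PS k n) M]

namespace MGrading

variable (gr : MGrading k n M)

lemma X_smul_mem {i : Fin n} {d : Fin n → ℕ} {m : M} (hm : m ∈ gr.piece (natDeg d)) :
    (X i : PS k n) • m ∈ gr.piece (natDeg (d + Pi.single i 1)) := by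
  rw [natDeg_add, natDeg_single_one]
  exact gr.smul_mem i _ m hm

lemma X_pow_smul_mem {i : Fin n} {d : Fin n → ℕ} {m : M} (hm : m ∈ gr.piece (natDeg d))
    (e : ℕ) : (X i ^ e : PS k n) • m ∈ gr.piece (natDeg (d + Pi.single i e)) := by
  induction e with
  | zero => simpa using hm
  | succ e ih =>
    rw [pow_succ', mul_smul, Pi.single_add, ← add_assoc]
    exact gr.X_smul_mem ih

lemma monomial_smul_mem (b : Fin n →₀ ℕ) {d : Fin n → ℕ} {m : M}
    (hm : m ∈ gr.piece (natDeg d)) :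
    (monomial b (1 : k) : PS k n) • m ∈ gr.piece (natDeg (d + ⇑b)) := by
  induction b using Finsupp.induction generalizing d m with
  | zero => simpa using hm
  | single_add i e f _ _ ih =>
    rw [monomial_single_add, mul_smul, Finsupp.coe_add, Finsupp.single_eq_pi_single, ← add_assoc,
      add_right_comm]
    exact gr.X_pow_smul_mem (ih hm) e

lemma mono_smul_mem (w : Fin n → ℕ) {d : Fin n → ℕ} {m : M}
    (hm : m ∈ gr.piece (natDeg d)) :
    mono k w • m ∈ gr.piece (natDeg (d + w)) :=
  gr.monomial_smul_mem (toFs w) hm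

lemma mono_sub_smul_mem {c d : Fin n → ℕ} (hcd : c ≤ d) {m : M}
    (hm : m ∈ gr.piece (natDeg c)) : mono k (d - c) • m ∈ gr.piece (natDeg d) := by
  simpa [add_tsub_cancel_of_le hcd] using gr.mono_smul_mem (d - c) hm

end MGrading

namespace IsPosDet

variable {a : Fin n → ℕ} {gr : MGrading k n M}

lemma bijOn_X_smul (h : IsPosDet a gr) {i : Fin n} {d : Fin n → ℕ} (hi : a i ≤ d i) :
    BijOn ((X i : PS k n) • ·) (gr.piece (natDeg d) : Set M)
      (gr.piece (natDeg (d + Pi.single i 1))) := by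
  rw [natDeg_add, natDeg_single_one]
  exact ⟨fun m hm => gr.smul_mem i _ m hm, fun m hm m' hm' => h.inj d i hi m hm m' hm',
    fun m' hm' => h.surj d i hi m' hm'⟩

lemma bijOn_X_pow_smul (h : IsPosDet a gr) {i : Fin n} {d : Fin n → ℕ} (hi : a i ≤ d i)
    (e : ℕ) :
    BijOn ((X i ^ e : PS k n) • ·) (gr.piece (natDeg d) : Set M)
      (gr.piece (natDeg (d + Pi.single i e))) := by
  induction e with
  | zero =>
    simp only [pow_zero, one_smul, Pi.single_zero, add_zero]
    exact bijOn_id _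
  | succ e ih =>
    have hi' : a i ≤ (d + Pi.single i e : Fin n → ℕ) i := by simp [hi, le_add_right]
    convert (h.bijOn_X_smul hi').comp ih using 2
    · simp [pow_succ', mul_smul]
    · rw [Pi.single_add, add_assoc]

lemma bijOn_monomial_smul (h : IsPosDet a gr) (b : Fin n →₀ ℕ) {d : Fin n → ℕ}
    (hb : ∀ j, b j ≠ 0 → a j ≤ d j) :
    BijOn ((monomial b (1 : k) : PS k n) • ·) (gr.piece (natDeg d) : Set M)
      (gr.piece (natDeg (d + ⇑b))) := by
  induction b using Finsupp.induction generalizing d with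
  | zero =>
    simp only [monomial_zero', C_1, one_smul, Finsupp.coe_zero, add_zero]
    exact bijOn_id _
  | single_add i e f _ he ih =>
    have hf : ∀ j, f j ≠ 0 → a j ≤ d j := fun j hj => hb j (by simp [hj])
    have hi : a i ≤ (d + ⇑f) i := le_add_right (hb i (by simp [he]))
    convert (h.bijOn_X_pow_smul hi e).comp (ih hf) using 2
    · simp [monomial_single_add, mul_smul]
    · rw [Finsupp.coe_add, Finsupp.single_eq_pi_single, ← add_assoc, add_right_comm]

lemma bijOn_mono_sub_inf_smul (h : IsPosDet a gr) (d : Fin n → ℕ) :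
    BijOn (mono k (d - d ⊓ a) • ·) (gr.piece (natDeg (d ⊓ a)) : Set M)
      (gr.piece (natDeg d)) := by
  have hbij : BijOn (mono k (d - d ⊓ a) • ·) (gr.piece (natDeg (d ⊓ a)) : Set M)
      (gr.piece (natDeg (d ⊓ a + (d - d ⊓ a)))) :=
    h.bijOn_monomial_smul (toFs (d - d ⊓ a)) fun j hj => by
      have : toFs (d - d ⊓ a) j = d j - min (d j) (a j) := rfl
      have : (d ⊓ a) j = min (d j) (a j) := rfl
      omega
  rwa [add_tsub_cancel_of_le (inf_le_left : d ⊓ a ≤ d)] at hbij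

end IsPosDet

end Grading

section MonomialBasis

variable {k : Type} [Field k] {n : ℕ} {M : Type} [AddCommGroup M]
  [Module (PS k n) M] [Module k M] [IsScalarTower k (PS k n) M]

def stanleyRegion (c : Fin n → ℕ) (Z : Finset (Fin n)) : Set (Fin n → ℕ) :=
  {d | c ≤ d ∧ ∀ j ∉ Z, d j = c j}

/-- In every degree `d`, the vectors `x^{d-cᵢ} mᵢ` with `d ∈ Rᵢ` form a `k`-basis of `M_d`.
Stanley decompositions are the case `Rᵢ = stanleyRegion cᵢ Zᵢ`, quasi Stanley decompositions
the case `Rᵢ = [[cᵢ,bᵢ]]ₐ`. -/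
structure IsMonomialBasis {ι : Type} (gr : MGrading k n M) (R : ι → Set (Fin n → ℕ))
    (c : ι → Fin n → ℕ) (m : ι → M) : Prop where
  mem_piece : ∀ i, m i ∈ gr.piece (natDeg (c i))
  linearIndependent : ∀ d,
    LinearIndependent k fun i : {i // d ∈ R i} => mono k (d - c i) • m i
  piece_eq_span : ∀ d, gr.piece (natDeg d) =
    Submodule.span k {y | ∃ i, d ∈ R i ∧ y = mono k (d - c i) • m i}

namespace IsMonomialBasis

variable {ι : Type} {gr : MGrading k n M} {R : ι → Set (Fin n → ℕ)}
  {c : ι → Fin n → ℕ} {m : ι → M}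

lemma comp_equiv (hB : IsMonomialBasis gr R c m) {ι' : Type} (e : ι' ≃ ι) :
    IsMonomialBasis gr (R ∘ e) (c ∘ e) (m ∘ e) where
  mem_piece i := hB.mem_piece (e i)
  linearIndependent d :=
    (linearIndependent_equiv (e.subtypeEquiv fun _ => Iff.rfl)).mpr (hB.linearIndependent d)
  piece_eq_span d := by
    rw [hB.piece_eq_span d]
    congr 1
    ext y
    exact e.surjective.exists

lemma mono_sub_smul_mem (hB : IsMonomialBasis gr R c m) {d : Fin n → ℕ} {i : ι}
    (hd : d ∈ R i) :
    mono k (d - c i) • m i ∈ gr.piece (natDeg d) :=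
  hB.piece_eq_span d ▸ Submodule.subset_span ⟨i, hd, rfl⟩

lemma linearIndependent_sigma (hB : IsMonomialBasis gr R c m) :
    LinearIndependent k fun p : Σ d, {i // d ∈ R i} => mono k (p.1 - c p.2) • m p.2 := by
  have hle : ∀ d,
      Submodule.span k (range fun i : {i // d ∈ R i} => mono k (d - c i) • m i) ≤
        gr.piece (natDeg d) := fun d => Submodule.span_le.mpr <| by
    rintro _ ⟨i, rfl⟩
    exact hB.mono_sub_smul_mem i.2
  exact linearIndependent_iUnion_finite hB.linearIndependent fun d t _ hdt =>
    ((gr.indep.comp natDeg_injective).disjoint_biSup hdt).mono (hle d)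
      (iSup₂_mono fun d' _ => hle d')

end IsMonomialBasis

end MonomialBasis

section StanleySpaces

variable {k : Type} [Field k] {n : ℕ} {M : Type} [AddCommGroup M]
  [Module (PS k n) M] [Module k M]

lemma toFs_sub_support_subset {c d : Fin n → ℕ} {Z : Finset (Fin n)}
    (hd : d ∈ stanleyRegion c Z) : ∀ j ∈ (toFs (d - c)).support, j ∈ Z := by
  intro j hj
  by_contra hjZ
  exact Finsupp.mem_support_iff.mp hj (show d j - c j = 0 by rw [hd.2 j hjZ, Nat.sub_self])

lemma add_mem_stanleyRegion (c : Fin n → ℕ) {Z : Finset (Fin n)} {b : Fin n →₀ ℕ}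
    (hb : ∀ j ∈ b.support, j ∈ Z) : c + ⇑b ∈ stanleyRegion c Z :=
  ⟨fun j => Nat.le_add_right _ _, fun j hj => by
    simp [Finsupp.notMem_support_iff.mp (mt (hb j) hj)]⟩

lemma mono_sub_smul_mem_stanleySub {c d : Fin n → ℕ} {Z : Finset (Fin n)}
    (hd : d ∈ stanleyRegion c Z) (m : M) : mono k (d - c) • m ∈ stanleySub (k := k) m Z :=
  Submodule.subset_span ⟨_, toFs_sub_support_subset hd, rfl⟩

lemma stanleySub_le_span_image {ι : Type} {c : ι → Fin n → ℕ} {Z : ι → Finset (Fin n)}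
    {m : ι → M} {T : Set ι} {i : ι} (hi : i ∈ T) :
    stanleySub (k := k) (m i) (Z i) ≤ Submodule.span k
      ((fun p : Σ d, {i // d ∈ stanleyRegion (c i) (Z i)} => mono k (p.1 - c p.2) • m p.2) ''
        {p | p.2.1 ∈ T}) := by
  rw [stanleySub, Submodule.span_le]
  rintro _ ⟨b, hb, rfl⟩
  exact Submodule.subset_span ⟨⟨c i + ⇑b, i, add_mem_stanleyRegion _ hb⟩, hi,
    by simp [mono_coe]⟩

end StanleySpaces

section Stanley

variable {k : Type} [Field k] {n : ℕ} {M : Type} [AddCommGroup M]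
  [Module (PS k n) M] [Module k M] [IsScalarTower k (PS k n) M]

namespace IsMonomialBasis

variable {ι : Type} {gr : MGrading k n M} {c : ι → Fin n → ℕ} {Z : ι → Finset (Fin n)}
  {m : ι → M}

lemma linearIndependent_monomial_smul
    (hB : IsMonomialBasis gr (fun i => stanleyRegion (c i) (Z i)) c m) (i : ι) :
    LinearIndependent k fun b : {b : Fin n →₀ ℕ // ∀ j ∈ b.support, j ∈ Z i} =>
      (monomial (b : Fin n →₀ ℕ) (1 : k) : PS k n) • m i := by
  let φ : {b : Fin n →₀ ℕ // ∀ j ∈ b.support, j ∈ Z i} →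
      Σ d, {i // d ∈ stanleyRegion (c i) (Z i)} :=
    fun b => ⟨c i + ⇑b.1, i, add_mem_stanleyRegion _ b.2⟩
  have hφ : Function.Injective φ := fun b b' hbb =>
    Subtype.ext (DFunLike.coe_injective (add_left_cancel (congrArg Sigma.fst hbb)))
  convert hB.linearIndependent_sigma.comp φ hφ with b
  simp [φ, mono_coe]

lemma iSupIndep_stanleySub (hB : IsMonomialBasis gr (fun i => stanleyRegion (c i) (Z i)) c m) :
    iSupIndep fun i => stanleySub (k := k) (m i) (Z i) := fun i =>
  (hB.linearIndependent_sigma.disjoint_span_image (s := {p | p.2.1 ∈ ({i} : Set ι)})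
    (t := {p | p.2.1 ∈ ({i}ᶜ : Set ι)}) (Set.disjoint_left.mpr fun _ h1 h2 => h2 h1)).mono
    (stanleySub_le_span_image (T := {i}) rfl)
    (iSup₂_le fun _ hj => stanleySub_le_span_image (T := {i}ᶜ) hj)

lemma iSup_stanleySub_eq_top (hneg : ∀ e : Fin n → ℤ, (∃ j, e j < 0) → gr.piece e = ⊥)
    (hB : IsMonomialBasis gr (fun i => stanleyRegion (c i) (Z i)) c m) :
    ⨆ i, stanleySub (k := k) (m i) (Z i) = ⊤ := by
  rw [eq_top_iff, ← gr.total, iSup_le_iff]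
  intro e
  by_cases he : ∃ j, e j < 0
  · rw [hneg e he]
    exact bot_le
  · simp only [not_exists, not_lt] at he
    rw [← natDeg_toNat he, hB.piece_eq_span, Submodule.span_le]
    rintro _ ⟨i, hd, rfl⟩
    exact Submodule.mem_iSup_of_mem i (mono_sub_smul_mem_stanleySub hd _)

def toStanleyDecomp {s : ℕ} {c : Fin s → Fin n → ℕ} {Z : Fin s → Finset (Fin n)}
    {m : Fin s → M}
    (hneg : ∀ e : Fin n → ℤ, (∃ j, e j < 0) → gr.piece e = ⊥)
    (hB : IsMonomialBasis gr (fun i => stanleyRegion (c i) (Z i)) c m) : StanleyDecomp gr where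
  s := s
  elem := m
  deg i := natDeg (c i)
  Z := Z
  homog := hB.mem_piece
  free := hB.linearIndependent_monomial_smul
  indep := hB.iSupIndep_stanleySub
  total := hB.iSup_stanleySub_eq_top hneg

lemma exists_stanleyDecomp [Fintype ι]
    (hneg : ∀ e : Fin n → ℤ, (∃ j, e j < 0) → gr.piece e = ⊥)
    (hB : IsMonomialBasis gr (fun i => stanleyRegion (c i) (Z i)) c m) :
    ∃ D : StanleyDecomp gr, ∀ i', ∃ i, D.Z i' = Z i :=
  ⟨(hB.comp_equiv (Fintype.equivFin ι).symm).toStanleyDecomp hneg, fun _ => ⟨_, rfl⟩⟩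

end IsMonomialBasis

namespace StanleyDecomp

variable {gr : MGrading k n M} (D : StanleyDecomp gr)

lemma elem_ne_zero (i : Fin D.s) : D.elem i ≠ 0 := by
  simpa [monomial_zero', C_1] using (D.free i).ne_zero ⟨0, by simp⟩

def bottom (i : Fin D.s) : Fin n → ℕ := fun j => (D.deg i j).toNat

lemma natDeg_bottom (hneg : ∀ e : Fin n → ℤ, (∃ j, e j < 0) → gr.piece e = ⊥)
    (i : Fin D.s) :
    natDeg (D.bottom i) = D.deg i := by
  refine natDeg_toNat fun j => le_of_not_gt fun hj => ?_
  exact D.elem_ne_zero i (by simpa [hneg _ ⟨j, hj⟩] using D.homog i)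

lemma piece_eq_span (hneg : ∀ e : Fin n → ℤ, (∃ j, e j < 0) → gr.piece e = ⊥)
    (d : Fin n → ℕ) :
    gr.piece (natDeg d) = Submodule.span k {y | ∃ i,
      d ∈ stanleyRegion (D.bottom i) (D.Z i) ∧ y = mono k (d - D.bottom i) • D.elem i} := by
  let A : (Fin n → ℤ) → Submodule k M := fun e => Submodule.span k {y | ∃ d,
    natDeg d = e ∧
      ∃ i, d ∈ stanleyRegion (D.bottom i) (D.Z i) ∧ y = mono k (d - D.bottom i) • D.elem i}
  have hA_le : A ≤ gr.piece := fun e => Submodule.span_le.mpr <| by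
    rintro _ ⟨d, rfl, i, hd, rfl⟩
    exact gr.mono_sub_smul_mem hd.1 (D.natDeg_bottom hneg i ▸ D.homog i)
  have hA_top : iSup A = ⊤ := by
    rw [eq_top_iff, ← D.total, iSup_le_iff]
    intro i
    rw [stanleySub, Submodule.span_le]
    rintro _ ⟨b, hb, rfl⟩
    exact Submodule.mem_iSup_of_mem _ (Submodule.subset_span ⟨D.bottom i + ⇑b, rfl, i,
      add_mem_stanleyRegion _ hb, by rw [add_tsub_cancel_left, mono_coe]⟩)
  -- subspaces of independent pieces that together span `M` must be the pieces themselves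
  rw [← congrFun ((gr.indep.le_iff_eq_of_iSup_eq_top hA_top).mp hA_le) (natDeg d)]
  simp only [A, natDeg_injective.eq_iff, exists_eq_left]

lemma isMonomialBasis (hneg : ∀ e : Fin n → ℤ, (∃ j, e j < 0) → gr.piece e = ⊥) :
    IsMonomialBasis gr (fun i => stanleyRegion (D.bottom i) (D.Z i)) D.bottom D.elem := by
  refine ⟨fun i => ?_, fun d => ?_, D.piece_eq_span hneg⟩
  · rw [D.natDeg_bottom hneg i]
    exact D.homog i
  · refine (D.indep.comp Subtype.val_injective).linearIndependent _
      (fun i => mono_sub_smul_mem_stanleySub i.2 _) fun i => ?_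
    have hd : d ∈ stanleyRegion (D.bottom i.1) (D.Z i.1) := i.2
    have hne := (D.free i.1).ne_zero ⟨toFs (d - D.bottom i.1), toFs_sub_support_subset hd⟩
    exact hne

end StanleyDecomp

end Stanley

section Quasi

variable {n : ℕ}

def aSupport (a b : Fin n → ℕ) : Finset (Fin n) := Finset.univ.filter fun j => a j ≤ b j

/-- The bottom corners of the Stanley regions `c' + ℕ^{suppᵃ(b)}` partitioning `[[c,b]]ₐ`. -/
def corners (a c b : Fin n → ℕ) : Finset (Fin n → ℕ) :=
  (Finset.Icc c b).filter fun c' => ∀ j ∈ aSupport a b, c' j = c j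

lemma mem_intervalSet_iff_exists_corner {a c b d : Fin n → ℕ} (hcb : c ≤ b) :
    d ∈ intervalSet a c b ↔
      ∃ c' ∈ corners a c b, d ∈ stanleyRegion c' (aSupport a b) := by
  simp only [intervalSet, corners, aSupport, stanleyRegion, Finset.mem_filter, Finset.mem_Icc,
    Finset.mem_univ, true_and, Pi.le_def]
  constructor
  · rintro ⟨hcd, hdb⟩
    refine ⟨fun j => if a j ≤ b j then c j else d j,
      ⟨⟨fun j => ?_, fun j => ?_⟩, fun j hj => ?_⟩, fun j => ?_, fun j hj => ?_⟩
    all_goals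
      have := hcb j
      have := hcd j
      have := hdb j
      dsimp only
      split_ifs <;> omega
  · rintro ⟨c', ⟨⟨hcc', hc'b⟩, hc'⟩, hc'd, hd⟩
    refine ⟨fun j => (hcc' j).trans (hc'd j), fun j hj => ?_⟩
    rw [hd j hj.not_ge]
    exact hc'b j

lemma eq_of_mem_corners {a c b c' c'' d : Fin n → ℕ} (hc' : c' ∈ corners a c b)
    (hc'' : c'' ∈ corners a c b) (hd' : d ∈ stanleyRegion c' (aSupport a b))
    (hd'' : d ∈ stanleyRegion c'' (aSupport a b)) : c' = c'' := by
  simp only [corners, Finset.mem_filter] at hc' hc''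
  funext j
  by_cases hj : j ∈ aSupport a b
  · rw [hc'.2 j hj, hc''.2 j hj]
  · rw [← hd'.2 j hj, ← hd''.2 j hj]

lemma le_of_mem_corners {a c b c' : Fin n → ℕ} (hc' : c' ∈ corners a c b) : c ≤ c' :=
  (Finset.mem_Icc.mp (Finset.mem_filter.mp hc').1).1

def raiseOn (a c : Fin n → ℕ) (Z : Finset (Fin n)) : Fin n → ℕ :=
  fun j => if j ∈ Z then a j else c j

lemma le_raiseOn {a c : Fin n → ℕ} (hca : c ≤ a) (Z : Finset (Fin n)) : c ≤ raiseOn a c Z :=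
  fun j => by unfold raiseOn; split_ifs <;> simp [hca j]

lemma raiseOn_le {a c : Fin n → ℕ} (hca : c ≤ a) (Z : Finset (Fin n)) : raiseOn a c Z ≤ a :=
  fun j => by unfold raiseOn; split_ifs <;> simp [hca j]

lemma card_le_suppCardA_raiseOn (a c : Fin n → ℕ) (Z : Finset (Fin n)) :
    Z.card ≤ suppCardA a (raiseOn a c Z) :=
  Finset.card_le_card fun j hj =>
    Finset.mem_filter.mpr ⟨Finset.mem_univ j, by simp [raiseOn, hj]⟩

lemma mem_intervalSet_raiseOn_iff {a c d : Fin n → ℕ} (hca : c ≤ a) {Z : Finset (Fin n)} :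
    d ∈ intervalSet a c (raiseOn a c Z) ↔ d ⊓ a ∈ stanleyRegion c Z := by
  simp only [intervalSet, stanleyRegion, raiseOn, Pi.le_def]
  have hmin : ∀ j, (d ⊓ a) j = min (d j) (a j) := fun _ => rfl
  constructor
  · rintro ⟨hcd, hd⟩
    refine ⟨fun j => (hmin j).symm ▸ le_min (hcd j) (hca j), fun j hj => ?_⟩
    have hdj := hd j
    have : c j ≤ a j := hca j
    have := hcd j
    have := hmin j
    simp only [hj, if_false] at hdj
    omega
  · rintro ⟨hcd, hd⟩
    refine ⟨fun j => (hcd j).trans ((hmin j).symm ▸ min_le_left _ _), fun j hj => ?_⟩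
    by_cases hjZ : j ∈ Z
    · simp [hjZ] at hj
    · have := hd j hjZ
      have := hcd j
      have := hmin j
      simp only [hjZ, if_false] at hj ⊢
      omega

end Quasi

section QuasiBasis

variable {k : Type} [Field k] {n : ℕ} {M : Type} [AddCommGroup M]
  [Module (PS k n) M] [Module k M] [IsScalarTower k (PS k n) M]
  {a : Fin n → ℕ} {gr : MGrading k n M}

lemma QSDecomp.isMonomialBasis (D : QSDecomp a gr) :
    IsMonomialBasis gr (fun i => intervalSet a (D.c i) (D.b i)) D.c fun i => D.f i (D.c i) where
  mem_piece i := D.mem i (D.c i) ⟨fun _ => le_rfl, fun j _ => D.cb i j⟩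
  linearIndependent d := by
    convert D.li d using 2 with i
    exact (D.compat i d i.2).symm
  piece_eq_span d := by
    rw [D.span d]
    congr 1
    ext y
    exact exists_congr fun i => and_congr_right fun hd => by rw [D.compat i d hd]; rfl

namespace IsMonomialBasis

variable {ι : Type} {c b : ι → Fin n → ℕ} {m : ι → M}

lemma splitIntervals (hcb : ∀ i, c i ≤ b i)
    (hB : IsMonomialBasis gr (fun i => intervalSet a (c i) (b i)) c m) :
    IsMonomialBasis gr
      (fun p : Σ i, corners a (c i) (b i) => stanleyRegion p.2.1 (aSupport a (b p.1)))
      (fun p => p.2.1) fun p => mono k (p.2.1 - c p.1) • m p.1 := by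
  have hvec : ∀ (p : Σ i, corners a (c i) (b i)) d,
      d ∈ stanleyRegion p.2.1 (aSupport a (b p.1)) →
      mono k (d - p.2.1) • mono k (p.2.1 - c p.1) • m p.1 = mono k (d - c p.1) • m p.1 :=
    fun p _ hd => mono_sub_smul_mono_sub_smul (le_of_mem_corners p.2.2) hd.1 _
  have hmem : ∀ (p : Σ i, corners a (c i) (b i)) d,
      d ∈ stanleyRegion p.2.1 (aSupport a (b p.1)) →
      d ∈ intervalSet a (c p.1) (b p.1) := fun p d hd =>
    (mem_intervalSet_iff_exists_corner (hcb p.1)).mpr ⟨p.2.1, p.2.2, hd⟩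
  refine ⟨fun p => gr.mono_sub_smul_mem (le_of_mem_corners p.2.2) (hB.mem_piece p.1),
    fun d => ?_, fun d => ?_⟩
  · let φ : {p : Σ i, corners a (c i) (b i) //
          d ∈ stanleyRegion p.2.1 (aSupport a (b p.1))} →
        {i // d ∈ intervalSet a (c i) (b i)} := fun p => ⟨p.1.1, hmem p.1 d p.2⟩
    have hφ : Function.Injective φ := fun p q hpq => by
      obtain ⟨⟨i, c', hc'⟩, hd'⟩ := p
      obtain ⟨⟨i', c'', hc''⟩, hd''⟩ := q
      obtain rfl : i = i' := congrArg Subtype.val hpq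
      obtain rfl : c' = c'' := eq_of_mem_corners hc' hc'' hd' hd''
      rfl
    convert (hB.linearIndependent d).comp φ hφ with p
    exact hvec p.1 d p.2
  · rw [hB.piece_eq_span d]
    congr 1
    ext y
    constructor
    · rintro ⟨i, hd, rfl⟩
      obtain ⟨c', hc', hdc'⟩ := (mem_intervalSet_iff_exists_corner (hcb i)).mp hd
      exact ⟨⟨i, c', hc'⟩, hdc', (hvec ⟨i, c', hc'⟩ d hdc').symm⟩
    · rintro ⟨p, hd, rfl⟩
      exact ⟨p.1, hmem p d hd, hvec p d hd⟩

lemma truncate (h : IsPosDet a gr) {Z : ι → Finset (Fin n)}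
    (hB : IsMonomialBasis gr (fun i => stanleyRegion (c i) (Z i)) c m) :
    IsMonomialBasis gr (fun p : {i // c i ≤ a} => intervalSet a (c p) (raiseOn a (c p) (Z p)))
      (fun p => c p) fun p => m p := by
  refine ⟨fun p => hB.mem_piece p, fun d => ?_, fun d => ?_⟩
  · let L := DistribSMul.toLinearMap k M (mono k (d - d ⊓ a))
    let ψ : {p : {i // c i ≤ a} // d ∈ intervalSet a (c p) (raiseOn a (c p) (Z p))} →
        {i // d ⊓ a ∈ stanleyRegion (c i) (Z i)} :=
      fun p => ⟨p.1.1, (mem_intervalSet_raiseOn_iff p.1.2).mp p.2⟩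
    have hψ : Function.Injective ψ := fun p q hpq =>
      Subtype.ext (Subtype.ext (congrArg Subtype.val hpq :))
    have hinj : InjOn L (Submodule.span k (range
        fun i : {i // d ⊓ a ∈ stanleyRegion (c i) (Z i)} => mono k (d ⊓ a - c i) • m i)) :=
      (h.bijOn_mono_sub_inf_smul d).injOn.mono <| by
      rw [SetLike.coe_subset_coe, Submodule.span_le]
      rintro _ ⟨i, rfl⟩
      exact hB.mono_sub_smul_mem i.2
    convert ((L.linearIndependent_iff_of_injOn hinj).mpr
      (hB.linearIndependent (d ⊓ a))).comp ψ hψ with p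
    exact (mono_sub_smul_mono_sub_smul (ψ p).2.1 inf_le_left _).symm
  · let L := DistribSMul.toLinearMap k M (mono k (d - d ⊓ a))
    have hL : BijOn L (gr.piece (natDeg (d ⊓ a)) : Set M) (gr.piece (natDeg d)) :=
      h.bijOn_mono_sub_inf_smul d
    apply SetLike.coe_injective
    rw [← hL.image_eq, hB.piece_eq_span, ← Submodule.map_coe, Submodule.map_span]
    congr 2
    ext y
    constructor
    · rintro ⟨_, ⟨i, hi, rfl⟩, rfl⟩
      have hca : c i ≤ a := hi.1.trans inf_le_right
      exact ⟨⟨i, hca⟩, (mem_intervalSet_raiseOn_iff hca).mpr hi,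
        mono_sub_smul_mono_sub_smul hi.1 inf_le_left _⟩
    · rintro ⟨p, hd, rfl⟩
      have hi := (mem_intervalSet_raiseOn_iff p.2).mp hd
      exact ⟨_, ⟨p.1, hi, rfl⟩, mono_sub_smul_mono_sub_smul hi.1 inf_le_left _⟩

noncomputable def toQSDecomp {s : ℕ} {c b : Fin s → Fin n → ℕ} {m : Fin s → M}
    (hcb : ∀ i, c i ≤ b i) (hba : ∀ i, b i ≤ a)
    (hB : IsMonomialBasis gr (fun i => intervalSet a (c i) (b i)) c m) :
    QSDecomp a gr where
  s := s
  c := c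
  b := b
  cb i := hcb i
  ba i := hba i
  f i d := mono k (d - c i) • m i
  compat i d _ := by
    rw [tsub_self, mono_zero, one_smul]
    rfl
  mem i _ hd := gr.mono_sub_smul_mem hd.1 (hB.mem_piece i)
  li := hB.linearIndependent
  span := hB.piece_eq_span

lemma exists_qsDecomp [Fintype ι] (hcb : ∀ i, c i ≤ b i) (hba : ∀ i, b i ≤ a)
    (hB : IsMonomialBasis gr (fun i => intervalSet a (c i) (b i)) c m) :
    ∃ D : QSDecomp a gr, ∀ i', ∃ i, D.b i' = b i :=
  ⟨(hB.comp_equiv (Fintype.equivFin ι).symm).toQSDecomp (fun _ => hcb _) (fun _ => hba _),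
    fun _ => ⟨_, rfl⟩⟩

end IsMonomialBasis

end QuasiBasis

section Comparison

variable {k : Type} [Field k] {n : ℕ} {M : Type} [AddCommGroup M]
  [Module (PS k n) M] [Module k M] [IsScalarTower k (PS k n) M]
  {a : Fin n → ℕ} {gr : MGrading k n M}

lemma StanleyDecomp.exists_qsDecomp (h : IsPosDet a gr) (D : StanleyDecomp gr) :
    ∃ D' : QSDecomp a gr, ∀ i', ∃ i, (D.Z i).card ≤ suppCardA a (D'.b i') := by
  classical
  obtain ⟨D', hD'⟩ := ((D.isMonomialBasis h.nonneg).truncate h).exists_qsDecomp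
    (fun p => le_raiseOn p.2 _) (fun p => raiseOn_le p.2 _)
  refine ⟨D', fun i' => ?_⟩
  obtain ⟨p, hp⟩ := hD' i'
  exact ⟨p, hp ▸ card_le_suppCardA_raiseOn _ _ _⟩

lemma QSDecomp.exists_stanleyDecomp
    (hneg : ∀ e : Fin n → ℤ, (∃ j, e j < 0) → gr.piece e = ⊥) (D : QSDecomp a gr) :
    ∃ D' : StanleyDecomp gr, ∀ i', ∃ i, (D'.Z i').card = suppCardA a (D.b i) := by
  obtain ⟨D', hD'⟩ :=
    (D.isMonomialBasis.splitIntervals fun i j => D.cb i j).exists_stanleyDecomp hneg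
  refine ⟨D', fun i' => ?_⟩
  obtain ⟨p, hp⟩ := hD' i'
  exact ⟨p.1, by rw [hp]; rfl⟩

end Comparison

theorem stmt6_general (k : Type) [Field k] (n : ℕ) (M : Type)
    [AddCommGroup M] [Module (PS k n) M] [Module k M] [IsScalarTower k (PS k n) M]
    (a : Fin n → ℕ) (gr : MGrading k n M) (h : IsPosDet a gr) :
    sdepth gr = sSup {t | ∃ D : QSDecomp a gr, ∀ i, t ≤ suppCardA a (D.b i)} := by
  unfold sdepth
  congr 1
  ext t
  constructor
  · rintro ⟨D, hD⟩
    obtain ⟨D', hD'⟩ := D.exists_qsDecomp h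
    exact ⟨D', fun i' => let ⟨i, hi⟩ := hD' i'; (hD i).trans hi⟩
  · rintro ⟨D, hD⟩
    obtain ⟨D', hD'⟩ := D.exists_stanleyDecomp h.nonneg
    exact ⟨D', fun i' => let ⟨i, hi⟩ := hD' i'; hi ▸ hD i⟩

theorem stmt6 (k : Type) [Field k] (n : ℕ) (M : Type)
    [AddCommGroup M] [Module (PS k n) M] [Module k M] [IsScalarTower k (PS k n) M] [Module.Finite (PS k n) M]
    (a : Fin n → ℕ) (gr : MGrading k n M) (h : IsPosDet a gr) :
    sdepth gr = sSup {t | ∃ D : QSDecomp a gr, ∀ i, t ≤ suppCardA a (D.b i)} :=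
  stmt6_general k n M a gr h
end

section
/- Let I be a monomial ideal minimally generated by x^{a₁},…,x^{a_r}, with irredundant irreducible decomposition I = ∩ᵢ₌₁ˢ 𝔪^{dᵢ}. Then for any b ∈ ℕⁿ, the sliding I^{◁b} := (x^{a₁◁b},…,x^{a_r◁b}) has irredundant irreducible decomposition I^{◁b} = ∩ᵢ₌₁ˢ 𝔪^{dᵢ◁b}. -/
open MvPolynomial

/-!
With truncated subtraction, `a ◁ b ≤ e` holds exactly when `a ≤ e - b`, and `𝔪^(d ◁ b)`
contains `x^e` exactly when `𝔪^d` contains `x^(e - b)`. So sliding by `b` replaces the set of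
monomials of a monomial ideal by its preimage under `e ↦ e - b`. Taking preimages commutes with
intersections, and is injective because `e ↦ e - b` is onto (`(e + b) - b = e`); hence equalities
and non-equalities between intersections of irreducible ideals survive sliding.
-/

namespace Ideal

variable {σ R : Type*} [CommSemiring R]

open MvPolynomial

def IsMonomial (I : Ideal (MvPolynomial σ R)) : Prop :=
  ∀ p ∈ I, ∀ m ∈ p.support, monomial m 1 ∈ I

/-- For monomial `J` this says `J = I^{◁b}`, since `x^(a ◁ b) ∣ x^e` iff `x^a ∣ x^(e - b)`. -/
def SlidesTo (I : Ideal (MvPolynomial σ R)) (b : σ →₀ ℕ) (J : Ideal (MvPolynomial σ R)) :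
    Prop :=
  ∀ e, monomial e 1 ∈ J ↔ monomial (e - b) 1 ∈ I

lemma mem_of_forall_monomial_mem {I : Ideal (MvPolynomial σ R)} {p : MvPolynomial σ R}
    (h : ∀ m ∈ p.support, monomial m 1 ∈ I) : p ∈ I := by
  rw [p.as_sum]
  refine Ideal.sum_mem _ fun m hm => ?_
  simpa [C_mul_monomial] using I.mul_mem_left (C (p.coeff m)) (h m hm)

lemma IsMonomial.ext {I J : Ideal (MvPolynomial σ R)} (hI : I.IsMonomial) (hJ : J.IsMonomial)
    (h : ∀ e, monomial e 1 ∈ I ↔ monomial e 1 ∈ J) : I = J :=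
  le_antisymm (fun _ hp => mem_of_forall_monomial_mem fun m hm => (h m).1 (hI _ hp m hm))
    (fun _ hp => mem_of_forall_monomial_mem fun m hm => (h m).2 (hJ _ hp m hm))

lemma isMonomial_span_monomial_image (s : Set (σ →₀ ℕ)) :
    (span ((fun m => monomial m (1 : R)) '' s)).IsMonomial := by
  intro p hp m hm
  obtain ⟨g, hg, hgm⟩ := mem_ideal_span_monomial_image.1 hp m hm
  have hsplit : monomial m (1 : R) = monomial (m - g) 1 * monomial g 1 := by
    rw [monomial_mul, one_mul, tsub_add_cancel_of_le hgm]
  rw [hsplit]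
  exact mul_mem_left _ _ (subset_span ⟨g, hg, rfl⟩)

lemma monomial_one_mem_span_monomial_image_iff [Nontrivial R] {s : Set (σ →₀ ℕ)} {e : σ →₀ ℕ} :
    monomial e (1 : R) ∈ span ((fun m => monomial m (1 : R)) '' s) ↔ ∃ g ∈ s, g ≤ e := by
  classical
  simp [mem_ideal_span_monomial_image, support_monomial]

lemma IsMonomial.iInf {ι : Sort*} {I : ι → Ideal (MvPolynomial σ R)}
    (hI : ∀ i, (I i).IsMonomial) : (⨅ i, I i).IsMonomial := by
  intro p hp m hm
  rw [mem_iInf] at hp ⊢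
  exact fun i => hI i p (hp i) m hm

lemma SlidesTo.iInf {ι : Sort*} {I J : ι → Ideal (MvPolynomial σ R)} {b : σ →₀ ℕ}
    (h : ∀ i, (I i).SlidesTo b (J i)) : (⨅ i, I i).SlidesTo b (⨅ i, J i) := by
  intro e
  simp only [mem_iInf]
  exact forall_congr' fun i => h i e

lemma SlidesTo.eq_of_eq {I J I' J' : Ideal (MvPolynomial σ R)} {b : σ →₀ ℕ}
    (hI : I.SlidesTo b I') (hJ : J.SlidesTo b J') (hI' : I'.IsMonomial) (hJ' : J'.IsMonomial)
    (h : I = J) : I' = J' :=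
  hI'.ext hJ' fun e => by rw [hI, hJ, h]

lemma SlidesTo.ne_of_ne {I J I' J' : Ideal (MvPolynomial σ R)} {b : σ →₀ ℕ}
    (hI : I.SlidesTo b I') (hJ : J.SlidesTo b J') (hI₀ : I.IsMonomial) (hJ₀ : J.IsMonomial)
    (h : I ≠ J) : I' ≠ J' := by
  rintro h'
  refine h (hI₀.ext hJ₀ fun e => ?_)
  rw [← add_tsub_cancel_right e b, ← hI, ← hJ, h']

end Ideal

section Sliding

open Ideal

variable {k : Type} [Field k] {n : ℕ}

lemma slide_le_iff (a b e : Fin n → ℕ) (l : Fin n) : slide a b l ≤ e l ↔ a l ≤ e l - b l := by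
  unfold slide
  split_ifs <;> omega

lemma pos_and_slide_le_iff (a b e : Fin n → ℕ) (l : Fin n) :
    0 < slide a b l ∧ slide a b l ≤ e l ↔ 0 < a l ∧ a l ≤ e l - b l := by
  unfold slide
  split_ifs <;> omega

lemma span_mono_eq {r : ℕ} (A : Fin r → Fin n → ℕ) :
    span {p | ∃ i : Fin r, p = mono k (A i)} =
      span ((fun m => monomial m (1 : k)) '' Set.range fun i => toFs (A i)) := by
  congr 1
  ext p
  simp [mono, eq_comm]

lemma irrIdeal_eq (d : Fin n → ℕ) :
    irrIdeal k d = span ((fun m => monomial m (1 : k)) ''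
      {m | ∃ i, 0 < d i ∧ m = Finsupp.single i (d i)}) := by
  unfold irrIdeal
  congr 1
  ext p
  simp only [Set.mem_ofPred_eq, Set.mem_image]
  constructor
  · rintro ⟨i, hi, rfl⟩
    exact ⟨_, ⟨i, hi, rfl⟩, X_pow_eq_monomial.symm⟩
  · rintro ⟨_, ⟨i, hi, rfl⟩, rfl⟩
    exact ⟨i, hi, X_pow_eq_monomial.symm⟩

lemma isMonomial_span_mono {r : ℕ} (A : Fin r → Fin n → ℕ) :
    (span {p | ∃ i : Fin r, p = mono k (A i)}).IsMonomial := by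
  rw [span_mono_eq]
  exact isMonomial_span_monomial_image _

lemma isMonomial_irrIdeal (d : Fin n → ℕ) : (irrIdeal k d).IsMonomial := by
  rw [irrIdeal_eq]
  exact isMonomial_span_monomial_image _

lemma monomial_mem_span_mono_iff {r : ℕ} (A : Fin r → Fin n → ℕ) (e : Fin n →₀ ℕ) :
    monomial e (1 : k) ∈ span {p | ∃ i : Fin r, p = mono k (A i)} ↔ ∃ i, ∀ l, A i l ≤ e l := by
  simp [span_mono_eq, monomial_one_mem_span_monomial_image_iff, Finsupp.le_def, toFs]

lemma monomial_mem_irrIdeal_iff (d : Fin n → ℕ) (e : Fin n →₀ ℕ) :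
    monomial e (1 : k) ∈ irrIdeal k d ↔ ∃ l, 0 < d l ∧ d l ≤ e l := by
  simp only [irrIdeal_eq, monomial_one_mem_span_monomial_image_iff, Set.mem_ofPred_eq]
  constructor
  · rintro ⟨_, ⟨l, hl, rfl⟩, hle⟩
    exact ⟨l, hl, Finsupp.single_le_iff.1 hle⟩
  · rintro ⟨l, hl, hle⟩
    exact ⟨_, ⟨l, hl, rfl⟩, Finsupp.single_le_iff.2 hle⟩

lemma slidesTo_span_mono {r : ℕ} (A : Fin r → Fin n → ℕ) (b : Fin n → ℕ) :
    (span {p | ∃ i : Fin r, p = mono k (A i)}).SlidesTo (toFs b)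
      (span {p | ∃ i : Fin r, p = mono k (slide (A i) b)}) := by
  intro e
  simp only [monomial_mem_span_mono_iff, slide_le_iff, Finsupp.tsub_apply]
  rfl

lemma slidesTo_irrIdeal (d b : Fin n → ℕ) :
    (irrIdeal k d).SlidesTo (toFs b) (irrIdeal k (slide d b)) := by
  intro e
  simp only [monomial_mem_irrIdeal_iff, pos_and_slide_le_iff, Finsupp.tsub_apply]
  rfl

end Sliding

theorem stmt15_general (k : Type) [Field k] (n : ℕ) (r s : ℕ)
    (A : Fin r → (Fin n → ℕ)) (D : Fin s → (Fin n → ℕ)) (b : Fin n → ℕ)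
    (hdecomp : Ideal.span {p | ∃ i : Fin r, p = mono k (A i)} =
      ⨅ i : Fin s, irrIdeal k (D i))
    (hirr : ∀ j : Fin s, (⨅ i : Fin s, ⨅ (_ : i ≠ j), irrIdeal k (D i)) ≠
      ⨅ i : Fin s, irrIdeal k (D i)) :
    Ideal.span {p | ∃ i : Fin r, p = mono k (slide (A i) b)} =
      (⨅ i : Fin s, irrIdeal k (slide (D i) b)) ∧
    ∀ j : Fin s, (⨅ i : Fin s, ⨅ (_ : i ≠ j), irrIdeal k (slide (D i) b)) ≠
      ⨅ i : Fin s, irrIdeal k (slide (D i) b) := by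
  have hmono : ∀ d : Fin n → ℕ, (irrIdeal k d).IsMonomial := isMonomial_irrIdeal
  have hslide : ∀ i, (irrIdeal k (D i)).SlidesTo (toFs b) (irrIdeal k (slide (D i) b)) :=
    fun i => slidesTo_irrIdeal (D i) b
  refine ⟨(slidesTo_span_mono A b).eq_of_eq (.iInf hslide) (isMonomial_span_mono _)
    (.iInf fun _ => hmono _) hdecomp, fun j => ?_⟩
  exact (Ideal.SlidesTo.iInf fun i => .iInf fun _ => hslide i).ne_of_ne (.iInf hslide)
    (.iInf fun _ => .iInf fun _ => hmono _) (.iInf fun _ => hmono _) (hirr j)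

theorem stmt15 (k : Type) [Field k] (n : ℕ) (r s : ℕ)
    (A : Fin r → (Fin n → ℕ)) (D : Fin s → (Fin n → ℕ)) (b : Fin n → ℕ)
    (hmin : ∀ j : Fin r,
      mono k (A j) ∉ Ideal.span {p | ∃ i : Fin r, i ≠ j ∧ p = mono k (A i)})
    (hdecomp : Ideal.span {p | ∃ i : Fin r, p = mono k (A i)} =
      ⨅ i : Fin s, irrIdeal k (D i))
    (hirr : ∀ j : Fin s, (⨅ i : Fin s, ⨅ (_ : i ≠ j), irrIdeal k (D i)) ≠
      ⨅ i : Fin s, irrIdeal k (D i)) :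
    Ideal.span {p | ∃ i : Fin r, p = mono k (slide (A i) b)} =
      (⨅ i : Fin s, irrIdeal k (slide (D i) b)) ∧
    ∀ j : Fin s, (⨅ i : Fin s, ⨅ (_ : i ≠ j), irrIdeal k (slide (D i) b)) ≠
      ⨅ i : Fin s, irrIdeal k (slide (D i) b) :=
  stmt15_general k n r s A D b hdecomp hirr
end
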